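/- Define m(ξ) = 2ξ·coth(ξ) − ξ²·csch²(ξ) − 1 for ξ ≠ 0. Suppose ψ : ℝ → ℝ is differentiable on (0,∞) and satisfies ψ(v) > 0 and m(ψ(v)) = v for all v > 0. Define Φ(v) = ψ(v)²·coth(ψ(v)) − (1+v)·ψ(v), and for t > 0 and (x,y) ∈ ℝ² with v(t,x,y) := −(x + y²/(4t))/t > 0, define φ(t,x,y) = t·Φ(v(t,x,y)). Then at every such point (t,x,y), ∂_x φ = ψ(v) > 0 and φ solves the eikonal equation ∂_t φ − (∂_x φ)²·coth(∂_x φ) + ∂_x φ + (∂_y φ)²/(∂_x φ) = 0. -/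

import Mathlib

/-- Hyperbolic cotangent. -/
noncomputable def coth (x : ℝ) : ℝ := Real.cosh x / Real.sinh x

/-- Hyperbolic cosecant. -/
noncomputable def csch (x : ℝ) : ℝ := 1 / Real.sinh x

/-- The group-velocity symbol `m(ξ) = 2ξcoth(ξ) − ξ²csch²(ξ) − 1`. -/
noncomputable def mfun (ξ : ℝ) : ℝ := 2 * ξ * coth ξ - ξ ^ 2 * csch ξ ^ 2 - 1

/-- The eikonal profile `Φ(v) = ψ(v)²coth(ψ(v)) − (1+v)ψ(v)` built from an inverse `ψ` of `m`. -/
noncomputable def eikProfile (ψ : ℝ → ℝ) (v : ℝ) : ℝ :=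
  ψ v ^ 2 * coth (ψ v) - (1 + v) * ψ v

/-- The phase `φ(t,x,y) = tΦ(−(x + y²/(4t))/t)`, as a function on `ℝ × ℝ × ℝ`. -/
noncomputable def eikPhase (ψ : ℝ → ℝ) (p : ℝ × ℝ × ℝ) : ℝ :=
  p.1 * eikProfile ψ (-(p.2.1 + p.2.2 ^ 2 / (4 * p.1)) / p.1)

lemma hasDerivAt_coth (x : ℝ) (hx : Real.sinh x ≠ 0) :
    HasDerivAt coth (-csch x ^ 2) x := by
  have h := (Real.hasDerivAt_cosh x).div (Real.hasDerivAt_sinh x) hx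
  refine h.congr_deriv ?_
  have h2 := Real.cosh_sq_sub_sinh_sq x
  unfold csch
  field_simp
  nlinarith [h2]

lemma hasDerivAt_sq_coth (x : ℝ) (hx : Real.sinh x ≠ 0) :
    HasDerivAt (fun ξ => ξ ^ 2 * coth ξ) (mfun x + 1) x := by
  have h := ((hasDerivAt_pow 2 x).mul (hasDerivAt_coth x hx))
  refine h.congr_deriv ?_
  unfold mfun
  ring

lemma hasDerivAt_profile (ψ : ℝ → ℝ) {v ψ' : ℝ} (hψ : HasDerivAt ψ ψ' v)
    (hpos : 0 < ψ v) (hinv : mfun (ψ v) = v) :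
    HasDerivAt (eikProfile ψ) (-ψ v) v := by
  have hs : Real.sinh (ψ v) ≠ 0 := ne_of_gt (Real.sinh_pos_iff.2 hpos)
  have h1 : HasDerivAt (fun w => ψ w ^ 2 * coth (ψ w)) ((mfun (ψ v) + 1) * ψ') v :=
    (hasDerivAt_sq_coth (ψ v) hs).comp v hψ
  have h2 : HasDerivAt (fun w => (1 + w) * ψ w) (1 * ψ v + (1 + v) * ψ') v :=
    ((hasDerivAt_id v).const_add 1).mul hψ
  have h := h1.sub h2
  refine h.congr_deriv ?_
  rw [hinv]; ring

theorem eikonal_equation_finite_depth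
    (ψ : ℝ → ℝ) (hdiff : DifferentiableOn ℝ ψ (Set.Ioi 0))
    (hpos : ∀ v : ℝ, 0 < v → 0 < ψ v)
    (hinv : ∀ v : ℝ, 0 < v → mfun (ψ v) = v)
    (t x y : ℝ) (ht : 0 < t) (hv : 0 < -(x + y ^ 2 / (4 * t)) / t) :
    fderiv ℝ (eikPhase ψ) (t, x, y) (0, 1, 0) = ψ (-(x + y ^ 2 / (4 * t)) / t) ∧
    0 < fderiv ℝ (eikPhase ψ) (t, x, y) (0, 1, 0) ∧
    fderiv ℝ (eikPhase ψ) (t, x, y) (1, 0, 0)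
        - (fderiv ℝ (eikPhase ψ) (t, x, y) (0, 1, 0)) ^ 2 *
            coth (fderiv ℝ (eikPhase ψ) (t, x, y) (0, 1, 0))
        + fderiv ℝ (eikPhase ψ) (t, x, y) (0, 1, 0)
        + (fderiv ℝ (eikPhase ψ) (t, x, y) (0, 0, 1)) ^ 2 /
            fderiv ℝ (eikPhase ψ) (t, x, y) (0, 1, 0) = 0 := by
  set v0 : ℝ := -(x + y ^ 2 / (4 * t)) / t with hv0def
  have ht' : t ≠ 0 := ne_of_gt ht
  have hψd : DifferentiableAt ℝ ψ v0 :=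
    hdiff.differentiableAt (Ioi_mem_nhds hv)
  obtain ⟨ψ', hψ⟩ : ∃ d, HasDerivAt ψ d v0 := ⟨_, hψd.hasDerivAt⟩
  have hΦ : HasDerivAt (eikProfile ψ) (-ψ v0) v0 :=
    hasDerivAt_profile ψ hψ (hpos v0 hv) (hinv v0 hv)
  have h1 : HasFDerivAt (fun p : ℝ × ℝ × ℝ => p.1)
      (ContinuousLinearMap.fst ℝ ℝ (ℝ × ℝ)) (t, x, y) := hasFDerivAt_fst
  have h2 : HasFDerivAt (fun p : ℝ × ℝ × ℝ => p.2.1)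
      ((ContinuousLinearMap.fst ℝ ℝ ℝ).comp (ContinuousLinearMap.snd ℝ ℝ (ℝ × ℝ)))
      (t, x, y) := hasFDerivAt_fst.comp _ hasFDerivAt_snd
  have h3 : HasFDerivAt (fun p : ℝ × ℝ × ℝ => p.2.2)
      ((ContinuousLinearMap.snd ℝ ℝ ℝ).comp (ContinuousLinearMap.snd ℝ ℝ (ℝ × ℝ)))
      (t, x, y) := hasFDerivAt_snd.comp _ hasFDerivAt_snd
  have hden : (4 : ℝ) * t ≠ 0 := by positivity
  have hinv1 : HasFDerivAt (fun p : ℝ × ℝ × ℝ => (p.1)⁻¹) _ (t, x, y) :=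
    (hasDerivAt_inv ht').comp_hasFDerivAt _ h1
  have hinv4 : HasFDerivAt (fun p : ℝ × ℝ × ℝ => (4 * p.1)⁻¹)
      ((-(((4:ℝ) * t) ^ 2)⁻¹) • ((4:ℝ) • ContinuousLinearMap.fst ℝ ℝ (ℝ × ℝ))) (t, x, y) :=
    HasDerivAt.comp_hasFDerivAt (t, x, y) (hasDerivAt_inv hden) (h1.const_mul 4)
  have hsq : HasFDerivAt (fun p : ℝ × ℝ × ℝ => p.2.2 ^ 2) _ (t, x, y) :=
    (hasDerivAt_pow 2 y).comp_hasFDerivAt (h₂ := fun u : ℝ => u ^ 2) _ h3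
  have hV : HasFDerivAt (fun p : ℝ × ℝ × ℝ => -(p.2.1 + p.2.2 ^ 2 / (4 * p.1)) / p.1)
      _ (t, x, y) := ((h2.add (hsq.mul hinv4)).neg).mul hinv1
  have hF0 := h1.mul (HasDerivAt.comp_hasFDerivAt (t, x, y) hΦ hV)
  set L' : (ℝ × ℝ × ℝ) →L[ℝ] ℝ :=
    (eikProfile ψ v0 - ψ v0 * (x / t + y ^ 2 / (2 * t ^ 2))) •
        ContinuousLinearMap.fst ℝ ℝ (ℝ × ℝ) +
      ψ v0 • ((ContinuousLinearMap.fst ℝ ℝ ℝ).comp (ContinuousLinearMap.snd ℝ ℝ (ℝ × ℝ))) +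
      (ψ v0 * y / (2 * t)) •
        ((ContinuousLinearMap.snd ℝ ℝ ℝ).comp (ContinuousLinearMap.snd ℝ ℝ (ℝ × ℝ)))
    with hL'
  have hF : HasFDerivAt (eikPhase ψ) L' (t, x, y) := by
    have heq : ∀ q : ℝ × ℝ × ℝ, eikPhase ψ q =
        (fun p : ℝ × ℝ × ℝ => p.1 *
          (eikProfile ψ ∘ fun p : ℝ × ℝ × ℝ => -(p.2.1 + p.2.2 ^ 2 / (4 * p.1)) / p.1) p) q :=
      fun _ => rfl
    refine HasFDerivAt.congr_fderiv (hF0.congr_of_eventuallyEq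
      (Filter.Eventually.of_forall heq)) ?_
    apply ContinuousLinearMap.ext
    rintro ⟨a, b, c⟩
    simp only [hL', ContinuousLinearMap.add_apply, ContinuousLinearMap.smul_apply,
      ContinuousLinearMap.comp_apply, ContinuousLinearMap.coe_fst', ContinuousLinearMap.coe_snd',
      ContinuousLinearMap.neg_apply, smul_eq_mul, Function.comp_apply, Pi.neg_apply, Pi.add_apply,
      Pi.mul_apply]
    rw [show -(x + y ^ 2 / (4 * t)) / t = v0 from rfl]
    field_simp
    ring
  rw [hF.fderiv]
  have hψ0 : 0 < ψ v0 := hpos v0 hv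
  simp only [hL', ContinuousLinearMap.add_apply, ContinuousLinearMap.smul_apply,
    ContinuousLinearMap.comp_apply, ContinuousLinearMap.coe_fst', ContinuousLinearMap.coe_snd',
    smul_eq_mul, mul_zero, mul_one, add_zero, zero_add]
  refine ⟨trivial, hψ0, ?_⟩
  have hψ0' : ψ v0 ≠ 0 := ne_of_gt hψ0
  rw [eikProfile]
  have hv0' : v0 = -(x + y ^ 2 / (4 * t)) / t := hv0def
  field_simp
  rw [hv0']
  field_simp
  ring
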